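/- arXiv:2512.18214 — 2 statements merged into one kernel-verified Lean document; each statement's English description precedes it below -/
import Mathlib

section
/- Define F(n, k) = f_{2k}·(ℓ_{2n} - 2) - f_{2n}·(ℓ_{2k} - 2) as an integer. Then for all natural numbers k < n with k ≥ 1, F(n, k) > 0. -/
def lucas : ℕ → ℕ
  | 0 => 2
  | 1 => 1
  | n + 2 => lucas (n + 1) + lucas n

def F (n k : ℕ) : ℤ :=
  (Nat.fib (2 * k) : ℤ) * ((lucas (2 * n) : ℤ) - 2) -
    (Nat.fib (2 * n) : ℤ) * ((lucas (2 * k) : ℤ) - 2)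

lemma lucas_add_two (m : ℕ) : lucas (m + 2) = lucas (m + 1) + lucas m := rfl

lemma key (m : ℕ) : (Nat.fib m : ℤ) * lucas (m + 1) - Nat.fib (m + 1) * lucas m
    = 2 * (-1) ^ (m + 1) := by
  induction m with
  | zero => simp [lucas]
  | succ m ih =>
    have h1 : (Nat.fib (m + 2) : ℤ) = Nat.fib (m + 1) + Nat.fib m := by
      rw [Nat.fib_add_two]; push_cast; ring
    have h2 : (lucas (m + 2) : ℤ) = lucas (m + 1) + lucas m := by
      rw [lucas_add_two]; push_cast; ring
    rw [h1, h2, pow_succ]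
    linear_combination -ih

lemma key_even (k : ℕ) :
    (Nat.fib (2 * k) : ℤ) * lucas (2 * k + 1) - Nat.fib (2 * k + 1) * lucas (2 * k) = -2 := by
  have := key (2 * k)
  have hodd : Odd (2 * k + 1) := odd_two_mul_add_one k
  rw [hodd.neg_one_pow] at this
  linarith

lemma F_self (k : ℕ) : F k k = 0 := by unfold F; ring

lemma F_succ (k : ℕ) : F (k + 1) k = 2 * Nat.fib (2 * k + 1) - 2 := by
  unfold F
  have e : 2 * (k + 1) = 2 * k + 2 := by ring
  rw [e]
  have h1 : (Nat.fib (2 * k + 2) : ℤ) = Nat.fib (2 * k + 1) + Nat.fib (2 * k) := by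
    rw [Nat.fib_add_two]; push_cast; ring
  have h2 : (lucas (2 * k + 2) : ℤ) = lucas (2 * k + 1) + lucas (2 * k) := by
    rw [lucas_add_two]; push_cast; ring
  rw [h1, h2]
  linear_combination key_even k

lemma F_rec (n k : ℕ) : F (n + 2) k = 3 * F (n + 1) k - F n k + 2 * Nat.fib (2 * k) := by
  unfold F
  have e2 : 2 * (n + 2) = 2 * n + 4 := by ring
  have e1 : 2 * (n + 1) = 2 * n + 2 := by ring
  rw [e1, e2]
  have hl : (lucas (2 * n + 4) : ℤ) = 3 * lucas (2 * n + 2) - lucas (2 * n) := by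
    have h1 : lucas (2 * n + 4) = lucas (2 * n + 3) + lucas (2 * n + 2) := rfl
    have h2 : lucas (2 * n + 3) = lucas (2 * n + 2) + lucas (2 * n + 1) := rfl
    have h3 : lucas (2 * n + 2) = lucas (2 * n + 1) + lucas (2 * n) := rfl
    push_cast [h1, h2, h3]; ring
  have hf : (Nat.fib (2 * n + 4) : ℤ) = 3 * Nat.fib (2 * n + 2) - Nat.fib (2 * n) := by
    have a1 := Nat.fib_add_two (n := 2 * n + 2)
    have a2 := Nat.fib_add_two (n := 2 * n + 1)
    have a3 := Nat.fib_add_two (n := 2 * n)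
    ring_nf at a1 a2 a3 ⊢
    omega
  rw [hl, hf]
  ring

theorem F_pos (n k : ℕ) (hk : 1 ≤ k) (hkn : k < n) : 0 < F n k := by
  have hfk : (0 : ℤ) ≤ Nat.fib (2 * k) := by positivity
  have hfib : (2 : ℤ) ≤ Nat.fib (2 * k + 1) := by
    have : Nat.fib 3 ≤ Nat.fib (2 * k + 1) := Nat.fib_mono (by omega)
    simpa using by exact_mod_cast this
  have hbase : 0 < F (k + 1) k := by rw [F_succ]; linarith
  have main : ∀ d, 0 < F (k + 1 + d) k ∧ F (k + 1 + d) k ≤ F (k + 1 + d + 1) k := by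
    intro d
    induction d with
    | zero =>
      refine ⟨hbase, ?_⟩
      have := F_rec k k
      rw [F_self] at this
      simp only [Nat.add_zero]
      have e : k + 1 + 1 = k + 2 := by ring
      rw [e, this]
      linarith
    | succ d ih =>
      obtain ⟨h1, h2⟩ := ih
      have e : k + 1 + (d + 1) = k + 1 + d + 1 := by ring
      rw [e]
      constructor
      · linarith
      · have := F_rec (k + 1 + d) k
        have e2 : k + 1 + d + 2 = k + 1 + d + 1 + 1 := by ring
        rw [e2] at this
        rw [this]
        linarith
  obtain ⟨d, rfl⟩ : ∃ d, n = k + 1 + d := ⟨n - (k + 1), by omega⟩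
  exact (main d).1
end

section
/- Let T(n) denote the number of spanning trees of the fan graph F_{n+1} (hub joined to a path on n vertices). Then T satisfies the recurrence T(n) = 3·T(n-1) - T(n-2) for n ≥ 3, with T(1) = 1 and T(2) = 3. -/
def fanGraph (n : ℕ) : SimpleGraph (Option (Fin n)) :=
  SimpleGraph.fromRel
    (fun a b => a = none ∨ ∃ i j : Fin n, a = some i ∧ b = some j ∧ (i : ℕ) + 1 = (j : ℕ))

noncomputable def fanTreeCount (n : ℕ) : ℕ :=
  Nat.card {H : (fanGraph n).Subgraph // H.IsSpanning ∧ H.coe.IsTree}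

/-!
Root the fan at its hub. A spanning tree of a connected graph is the same thing as a parent map:
a map fixing the root, sending every other vertex to a neighbour, and along whose iterates every
vertex reaches the root; the tree consists of the edges `{v, p v}`. In the fan the parent of a path
vertex is the hub or one of its two path neighbours, so a parent map is a word over
`{hub, left, right}`, and its iterates reach the hub exactly when no arrow leaves the path and no
`right` is immediately followed by a `left`. Among the words of length `m + 1` that start with no
`left` and have no `right` followed by a `left`, let `a m` count those not ending in `right` (the
tree words) and `b m` those ending in `right`.
Appending a letter gives `a (m + 1) = 2 a m + b m` and `b (m + 1) = a m + b m`, hence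
`a (m + 2) = 3 a (m + 1) - a m`.
-/

open Function

theorem Function.exists_iterate_eq_of_map_lt {V : Type*} {p : V → V} {r : V} (μ : V → ℕ)
    (hμ : ∀ v, v ≠ r → μ (p v) < μ v) (v : V) : ∃ k, p^[k] v = r := by
  induction hv : μ v using Nat.strong_induction_on generalizing v with
  | _ m ih =>
    by_cases hvr : v = r
    · exact ⟨0, hvr⟩
    obtain ⟨k, hk⟩ := ih _ (hv ▸ hμ v hvr) (p v) rfl
    exact ⟨k + 1, hk⟩

namespace SimpleGraph

variable {V : Type*} {G G' T : SimpleGraph V} {r : V} {p q : V → V}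

def subgraphSpanningTreeEquiv (G : SimpleGraph V) :
    {H : G.Subgraph // H.IsSpanning ∧ H.coe.IsTree} ≃
      {T : SimpleGraph V // T ≤ G ∧ T.IsTree} where
  toFun H := ⟨H.1.spanningCoe, H.1.spanningCoe_le,
    (H.1.spanningCoeEquivCoeOfSpanning H.2.1).isTree_iff.2 H.2.2⟩
  invFun T := ⟨toSubgraph T.1 T.2.1, toSubgraph.isSpanning _ _,
    (Subgraph.spanningCoeEquivCoeOfSpanning _ (toSubgraph.isSpanning _ _)).isTree_iff.1 T.2.2⟩
  left_inv H := Subtype.ext <| Subgraph.ext (Subgraph.isSpanning_iff.1 H.2.1).symm rfl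
  right_inv _ := rfl

structure IsParentMap (G : SimpleGraph V) (r : V) (p : V → V) : Prop where
  map_root : p r = r
  adj : ∀ v, v ≠ r → G.Adj v (p v)
  exists_iterate_eq_root : ∀ v, ∃ k, p^[k] v = r

namespace IsParentMap

noncomputable def depth (_hp : G.IsParentMap r p) (v : V) : ℕ :=
  sInf {k | p^[k] v = r}

lemma iterate_depth (hp : G.IsParentMap r p) (v : V) : p^[hp.depth v] v = r :=
  Nat.sInf_mem (hp.exists_iterate_eq_root v)

lemma depth_map_lt (hp : G.IsParentMap r p) {v : V} (hv : v ≠ r) :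
    hp.depth (p v) < hp.depth v := by
  obtain ⟨k, hk⟩ : ∃ k, hp.depth v = k + 1 :=
    Nat.exists_eq_succ_of_ne_zero fun h => hv (by simpa [h] using hp.iterate_depth v)
  have hspec := hp.iterate_depth v
  rw [hk, iterate_succ_apply] at hspec
  exact hk ▸ Nat.lt_succ_of_le (Nat.sInf_le hspec)

lemma map_ne (hp : G.IsParentMap r p) {v : V} (hv : v ≠ r) : p v ≠ v :=
  fun h => (hp.depth_map_lt hv).ne (congrArg hp.depth h)

lemma map_map_ne (hp : G.IsParentMap r p) {v : V} (hv : v ≠ r) : p (p v) ≠ v := by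
  intro h
  have hpv : p v ≠ r := fun hpv => hv (by rw [← h, hpv, hp.map_root])
  have := (hp.depth_map_lt hpv).trans (hp.depth_map_lt hv)
  rw [h] at this
  exact this.false

lemma mono (hp : G.IsParentMap r p) (hle : G ≤ G') : G'.IsParentMap r p :=
  ⟨hp.map_root, fun v hv => hle (hp.adj v hv), hp.exists_iterate_eq_root⟩

/-- Following `p` from `v` is a path, since the depth strictly decreases along it. -/
lemma exists_isPath (hp : G.IsParentMap r p) (v : V) :
    ∃ w : G.Walk v r, w.IsPath ∧ (∀ u ∈ w.support, hp.depth u ≤ hp.depth v) ∧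
      (v ≠ r → w.snd = p v) := by
  induction hv : hp.depth v using Nat.strong_induction_on generalizing v with
  | _ m ih =>
    by_cases hvr : v = r
    · subst hvr
      exact ⟨.nil, .nil, by simp_all, fun h => absurd rfl h⟩
    have hlt := hp.depth_map_lt hvr
    obtain ⟨w, hw, hdepth, -⟩ := ih _ (hv ▸ hlt) (p v) rfl
    refine ⟨.cons (hp.adj v hvr) w, ?_, ?_, fun _ => Walk.snd_cons w _⟩
    · exact hw.cons fun hmem => (hdepth v hmem).not_gt hlt
    · simp only [Walk.support_cons, List.mem_cons, forall_eq_or_imp]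
      exact ⟨hv.le, fun u hu => hv ▸ (hdepth u hu).trans hlt.le⟩

lemma eq_of_isAcyclic (hG : G.IsAcyclic) (hp : G.IsParentMap r p) (hq : G.IsParentMap r q) :
    p = q := by
  funext v
  by_cases hvr : v = r
  · rw [hvr, hp.map_root, hq.map_root]
  obtain ⟨w, hw, -, hwp⟩ := hp.exists_isPath v
  obtain ⟨w', hw', -, hwq⟩ := hq.exists_isPath v
  have : w = w' := congrArg Subtype.val ((hG.subsingleton_path v r).elim ⟨w, hw⟩ ⟨w', hw'⟩)
  rw [← hwp hvr, ← hwq hvr, this]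

end IsParentMap

/-- Send each vertex to a neighbour closer to `r`. -/
lemma Connected.exists_isParentMap (hG : G.Connected) (r : V) : ∃ p, G.IsParentMap r p := by
  have hclose : ∀ v, v ≠ r → ∃ u, G.Adj v u ∧ G.dist u r < G.dist v r := by
    intro v hv
    obtain ⟨w, hw⟩ := hG.exists_walk_length_eq_dist v r
    cases w with
    | nil => exact absurd rfl hv
    | cons h w' => exact ⟨_, h, (dist_le w').trans_lt (by simp [← hw])⟩
  choose! p hpadj hpdist using hclose
  classical
  refine ⟨fun v => if v = r then r else p v, by simp, fun v hv => by simpa [hv] using hpadj v hv,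
    exists_iterate_eq_of_map_lt (G.dist · r) fun v hv => ?_⟩
  simpa [hv] using hpdist v hv

def parentGraph (r : V) (p : V → V) : SimpleGraph V :=
  fromRel fun v w => v ≠ r ∧ w = p v

lemma parentGraph_adj {v w : V} :
    (parentGraph r p).Adj v w ↔ v ≠ w ∧ ((v ≠ r ∧ w = p v) ∨ (w ≠ r ∧ v = p w)) :=
  fromRel_adj ..

lemma isParentMap_parentGraph (hp : G.IsParentMap r p) : (parentGraph r p).IsParentMap r p :=
  ⟨hp.map_root, fun _ hv => parentGraph_adj.2 ⟨(hp.map_ne hv).symm, .inl ⟨hv, rfl⟩⟩,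
    hp.exists_iterate_eq_root⟩

namespace IsParentMap

lemma parentGraph_le (hp : G.IsParentMap r p) : parentGraph r p ≤ G := by
  rintro v w ⟨-, ⟨hv, rfl⟩ | ⟨hw, rfl⟩⟩
  exacts [hp.adj v hv, (hp.adj w hw).symm]

lemma connected_parentGraph (hp : G.IsParentMap r p) : (parentGraph r p).Connected :=
  have hreach v : (parentGraph r p).Reachable v r :=
    ((isParentMap_parentGraph hp).exists_isPath v).choose.reachable
  have : Nonempty V := ⟨r⟩
  ⟨fun u v => (hreach u).trans (hreach v).symm⟩

/-- On a cycle, a vertex `x` of maximal depth has no child, so both of its neighbours on the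
cycle would be `p x`. -/
lemma isAcyclic_parentGraph (hp : G.IsParentMap r p) :
    (parentGraph r p).IsAcyclic := by
  classical
  intro v c hc
  obtain ⟨x, hx, hmax⟩ := c.support.toFinset.exists_max_image hp.depth
    ⟨v, List.mem_toFinset.2 c.start_mem_support⟩
  rw [List.mem_toFinset] at hx
  set c' := c.rotate x hx
  have hc' : c'.IsCycle := hc.rotate hx
  have hparent : ∀ u ∈ c'.support, (parentGraph r p).Adj x u → u = p x := by
    intro u hu hxu
    obtain ⟨-, ⟨-, h⟩ | ⟨hur, rfl⟩⟩ := parentGraph_adj.1 hxu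
    · exact h
    · have := hmax u (List.mem_toFinset.2 ((c.mem_support_rotate_iff _ hx).1 hu))
      exact absurd (hp.depth_map_lt hur) this.not_gt
  exact hc'.snd_ne_penultimate <|
    (hparent _ (c'.getVert_mem_support 1) (c'.adj_snd hc'.not_nil)).trans
      (hparent _ (c'.getVert_mem_support _) (c'.adj_penultimate hc'.not_nil).symm).symm

lemma isTree_parentGraph (hp : G.IsParentMap r p) : (parentGraph r p).IsTree :=
  ⟨hp.connected_parentGraph, hp.isAcyclic_parentGraph⟩

end IsParentMap

lemma IsTree.parentGraph_eq (hT : T.IsTree) (hp : T.IsParentMap r p) : parentGraph r p = T :=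
  le_antisymm hp.parentGraph_le <|
    (isTree_iff_minimal_connected.1 hT).2 hp.connected_parentGraph hp.parentGraph_le

noncomputable def treeEquivParentMap (G : SimpleGraph V) (r : V) :
    {T : SimpleGraph V // T ≤ G ∧ T.IsTree} ≃ {p : V → V // G.IsParentMap r p} where
  toFun T := ⟨_, (T.2.2.connected.exists_isParentMap r).choose_spec.mono T.2.1⟩
  invFun p := ⟨parentGraph r p, p.2.parentGraph_le, p.2.isTree_parentGraph⟩
  left_inv T := Subtype.ext <|
    T.2.2.parentGraph_eq (T.2.2.connected.exists_isParentMap r).choose_spec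
  right_inv p := Subtype.ext <| IsParentMap.eq_of_isAcyclic p.2.isAcyclic_parentGraph
    (p.2.isTree_parentGraph.connected.exists_isParentMap r).choose_spec
    (isParentMap_parentGraph p.2)

theorem card_spanningTree_eq_card_isParentMap (G : SimpleGraph V) (r : V) :
    Nat.card {H : G.Subgraph // H.IsSpanning ∧ H.coe.IsTree} =
      Nat.card {p : V → V // G.IsParentMap r p} :=
  Nat.card_congr (G.subgraphSpanningTreeEquiv.trans (G.treeEquivParentMap r))

end SimpleGraph

namespace Fan

open Finset

inductive Dir
  | hub | left | right
  deriving DecidableEq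

instance : Fintype Dir := ⟨{.hub, .left, .right}, fun d => by cases d <;> simp⟩

variable {n : ℕ}

@[simp] lemma fanGraph_adj_none_some (i : Fin n) : (fanGraph n).Adj none (some i) := by
  simp [fanGraph]

@[simp] lemma fanGraph_adj_some_some {i j : Fin n} :
    (fanGraph n).Adj (some i) (some j) ↔ (i : ℕ) + 1 = j ∨ (j : ℕ) + 1 = i := by
  simp only [fanGraph, SimpleGraph.fromRel_adj]
  constructor
  · rintro ⟨-, h | h⟩ <;> simp_all
  · intro h
    refine ⟨fun hij => ?_, by simpa using h⟩
    simp only [Option.some.injEq] at hij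
    subst hij; omega

def Admissible (f : Fin n → Dir) : Prop :=
  (∀ i, f i = .left → 0 < (i : ℕ)) ∧
    ∀ i j : Fin n, (i : ℕ) + 1 = j → ¬(f i = .right ∧ f j = .left)

def IsTreeWord (f : Fin n → Dir) : Prop :=
  Admissible f ∧ ∀ i, f i = .right → (i : ℕ) + 1 < n

/-- Letter `i` says whether the parent of `some i` is the hub, `some (i - 1)` or `some (i + 1)`;
an arrow pointing off the path falls back to the hub. -/
def parentOfWord (f : Fin n → Dir) : Option (Fin n) → Option (Fin n)
  | none => none
  | some i =>
    match f i with
    | .hub => none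
    | .left => if h : 0 < (i : ℕ) then some ⟨i - 1, by omega⟩ else none
    | .right => if h : (i : ℕ) + 1 < n then some ⟨i + 1, h⟩ else none

def wordOfParent (p : Option (Fin n) → Option (Fin n)) (i : Fin n) : Dir :=
  match p (some i) with
  | none => .hub
  | some j => if i < j then .right else .left

variable {f : Fin n → Dir} {p : Option (Fin n) → Option (Fin n)}

lemma parentOfWord_of_hub {i : Fin n} (h : f i = .hub) : parentOfWord f (some i) = none := by
  simp [parentOfWord, h]

lemma parentOfWord_of_left {i : Fin n} (h : f i = .left) (hi : 0 < (i : ℕ)) :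
    parentOfWord f (some i) = some ⟨i - 1, by omega⟩ := by
  simp [parentOfWord, h, hi]

lemma parentOfWord_of_right {i : Fin n} (h : f i = .right) (hi : (i : ℕ) + 1 < n) :
    parentOfWord f (some i) = some ⟨i + 1, hi⟩ := by
  simp [parentOfWord, h, hi]

lemma IsTreeWord.isParentMap (hf : IsTreeWord f) :
    (fanGraph n).IsParentMap none (parentOfWord f) where
  map_root := rfl
  adj := by
    rintro (_ | i) hi
    · exact absurd rfl hi
    rcases hfi : f i
    · simpa [parentOfWord_of_hub hfi] using (fanGraph_adj_none_some i).symm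
    · have hi0 := hf.1.1 i hfi
      simp [parentOfWord_of_left hfi hi0]; omega
    · simp [parentOfWord_of_right hfi (hf.2 i hfi)]
  exists_iterate_eq_root := by
    -- `μ` decreases since a `left` is preceded by a `hub` or a `left`, and a `right` is followed
    -- by a `hub` or a `right`.
    let μ : Option (Fin n) → ℕ
      | none => 0
      | some i => match f i with
        | .hub => 1
        | .left => i + 2
        | .right => n - i + 2
    refine exists_iterate_eq_of_map_lt μ ?_
    rintro (_ | i) hi
    · exact absurd rfl hi
    rcases hfi : f i
    · simp [parentOfWord_of_hub hfi, μ, hfi]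
    · have hi0 := hf.1.1 i hfi
      have hj := hf.1.2 ⟨i - 1, by omega⟩ i (by simp; omega)
      rw [parentOfWord_of_left hfi hi0]
      rcases hfj : f ⟨i - 1, by omega⟩
      · simp [μ, hfi, hfj]
      · simp [μ, hfi, hfj]; omega
      · exact absurd ⟨hfj, hfi⟩ hj
    · have hin := hf.2 i hfi
      have hj := hf.1.2 i ⟨i + 1, hin⟩ rfl
      rw [parentOfWord_of_right hfi hin]
      rcases hfj : f ⟨i + 1, hin⟩
      · simp [μ, hfi, hfj]
      · exact absurd ⟨hfi, hfj⟩ hj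
      · simp [μ, hfi, hfj]; omega

lemma fan_parent_cases (hp : (fanGraph n).IsParentMap none p) (i : Fin n) :
    p (some i) = none ∨
      ∃ j : Fin n, p (some i) = some j ∧ ((i : ℕ) + 1 = j ∨ (j : ℕ) + 1 = i) := by
  rcases h : p (some i) with _ | j
  · exact .inl rfl
  · exact .inr ⟨j, rfl, by simpa [h] using hp.adj (some i) (by simp)⟩

lemma wordOfParent_of_none {i : Fin n} (h : p (some i) = none) : wordOfParent p i = .hub := by
  simp [wordOfParent, h]

lemma wordOfParent_of_succ {i j : Fin n} (h : p (some i) = some j) (hij : (i : ℕ) + 1 = j) :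
    wordOfParent p i = .right := by
  simp [wordOfParent, h, Fin.lt_def, ← hij]

lemma wordOfParent_of_pred {i j : Fin n} (h : p (some i) = some j) (hij : (j : ℕ) + 1 = i) :
    wordOfParent p i = .left := by
  simp [wordOfParent, h, Fin.lt_def, ← hij]

lemma isTreeWord_wordOfParent (hp : (fanGraph n).IsParentMap none p) :
    IsTreeWord (wordOfParent p) := by
  refine ⟨⟨fun i hi => ?_, fun i j hij ⟨hi, hj⟩ => ?_⟩, fun i hi => ?_⟩
  · rcases fan_parent_cases hp i with h | ⟨j, h, hij | hij⟩
    · simp [wordOfParent_of_none h] at hi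
    · simp [wordOfParent_of_succ h hij] at hi
    · omega
  · have hpi : p (some i) = some j := by
      rcases fan_parent_cases hp i with h | ⟨k, h, hik | hik⟩
      · simp [wordOfParent_of_none h] at hi
      · rw [h, Fin.ext (hik.symm.trans hij)]
      · simp [wordOfParent_of_pred h hik] at hi
    have hpj : p (some j) = some i := by
      rcases fan_parent_cases hp j with h | ⟨k, h, hjk | hjk⟩
      · simp [wordOfParent_of_none h] at hj
      · simp [wordOfParent_of_succ h hjk] at hj
      · rw [h, Fin.ext (by omega : (k : ℕ) = i)]
    exact hp.map_map_ne (v := some i) (by simp) (by rw [hpi, hpj])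
  · rcases fan_parent_cases hp i with h | ⟨j, h, hij | hij⟩
    · simp [wordOfParent_of_none h] at hi
    · exact hij ▸ j.isLt
    · simp [wordOfParent_of_pred h hij] at hi

lemma wordOfParent_parentOfWord (hf : IsTreeWord f) : wordOfParent (parentOfWord f) = f := by
  funext i
  rcases hfi : f i
  · exact wordOfParent_of_none (parentOfWord_of_hub hfi)
  · have hi := hf.1.1 i hfi
    exact wordOfParent_of_pred (parentOfWord_of_left hfi hi) (by simp; omega)
  · exact wordOfParent_of_succ (parentOfWord_of_right hfi (hf.2 i hfi)) rfl

lemma parentOfWord_wordOfParent (hp : (fanGraph n).IsParentMap none p) :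
    parentOfWord (wordOfParent p) = p := by
  funext v
  rcases v with _ | i
  · exact hp.map_root.symm
  rcases fan_parent_cases hp i with h | ⟨j, h, hij | hij⟩
  · rw [h, parentOfWord_of_hub (wordOfParent_of_none h)]
  · rw [h, parentOfWord_of_right (wordOfParent_of_succ h hij) (hij ▸ j.isLt)]
    exact congrArg some (Fin.ext hij)
  · rw [h, parentOfWord_of_left (wordOfParent_of_pred h hij) (by omega)]
    exact congrArg some (Fin.ext (by simp; omega))

def treeWordEquiv (n : ℕ) :
    {f : Fin n → Dir // IsTreeWord f} ≃ {p // (fanGraph n).IsParentMap none p} where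
  toFun f := ⟨parentOfWord f.1, f.2.isParentMap⟩
  invFun p := ⟨wordOfParent p.1, isTreeWord_wordOfParent p.2⟩
  left_inv f := Subtype.ext (wordOfParent_parentOfWord f.2)
  right_inv p := Subtype.ext (parentOfWord_wordOfParent p.2)

instance : DecidablePred (Admissible (n := n)) := fun _ => by unfold Admissible; infer_instance

instance : DecidablePred (IsTreeWord (n := n)) := fun _ => by unfold IsTreeWord; infer_instance

lemma admissible_snoc_iff {m : ℕ} (g : Fin (m + 1) → Dir) (d : Dir) :
    Admissible (Fin.snoc g d : Fin (m + 2) → Dir) ↔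
      Admissible g ∧ ¬(g (Fin.last m) = .right ∧ d = .left) := by
  simp only [Admissible, Fin.forall_fin_succ' (n := m + 1), Fin.snoc_castSucc, Fin.snoc_last,
    Fin.val_castSucc, Fin.val_last]
  constructor
  · rintro ⟨⟨hleft, -⟩, hpair, -⟩
    exact ⟨⟨hleft, fun i j hij => (hpair i).1 j hij⟩, (hpair (Fin.last m)).2 rfl⟩
  · rintro ⟨⟨hleft, hpair⟩, hlast⟩
    refine ⟨⟨hleft, fun _ => m.succ_pos⟩, fun i => ⟨hpair i, fun hi => ?_⟩,
      fun i hi => absurd i.isLt (by omega), fun h => absurd h (by omega)⟩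
    rwa [show i = Fin.last m from Fin.ext (by simp; omega)]

def endCount (m : ℕ) (P : Dir → Prop) [DecidablePred P] : ℕ :=
  #{f : Fin (m + 1) → Dir | Admissible f ∧ P (f (Fin.last m))}

lemma endCount_congr {m : ℕ} {P Q : Dir → Prop} [DecidablePred P] [DecidablePred Q]
    (h : ∀ d, P d ↔ Q d) : endCount m P = endCount m Q := by
  simp only [endCount, h]

lemma endCount_or {m : ℕ} {P Q : Dir → Prop} [DecidablePred P] [DecidablePred Q]
    (h : ∀ d, ¬(P d ∧ Q d)) :
    endCount m (fun d => P d ∨ Q d) = endCount m P + endCount m Q := by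
  rw [endCount, endCount, endCount, ← Finset.card_union_of_disjoint, ← Finset.filter_or]
  · simp only [and_or_left]
  · exact Finset.disjoint_filter.2 fun f _ hP hQ => h _ ⟨hP.2, hQ.2⟩

lemma endCount_succ_eq (m : ℕ) (d : Dir) :
    endCount (m + 1) (· = d) = endCount m (fun e => ¬(e = .right ∧ d = .left)) := by
  refine Finset.card_nbij' Fin.init (Fin.snoc · d) ?_ ?_ ?_ ?_
  · intro f hf
    simp only [mem_coe, mem_filter, mem_univ, true_and] at hf ⊢
    obtain ⟨hadm, rfl⟩ := hf
    rwa [← Fin.snoc_init_self f, admissible_snoc_iff] at hadm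
  · intro g hg
    simp only [mem_coe, mem_filter, mem_univ, true_and] at hg ⊢
    exact ⟨(admissible_snoc_iff g d).2 hg, Fin.snoc_last _ _⟩
  · intro f hf
    simp only [mem_coe, mem_filter, mem_univ, true_and] at hf
    simp only [← hf.2, Fin.snoc_init_self]
  · intro g _
    exact Fin.init_snoc _ _

lemma endCount_succ_of_ne_left (m : ℕ) {d : Dir} (hd : d ≠ .left) :
    endCount (m + 1) (· = d) = endCount m (· ≠ .right) + endCount m (· = .right) := by
  rw [endCount_succ_eq, ← endCount_or (by simp)]
  exact endCount_congr fun e => by simp [hd, em']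

lemma endCount_succ_left (m : ℕ) :
    endCount (m + 1) (· = .left) = endCount m (· ≠ .right) := by
  rw [endCount_succ_eq]
  exact endCount_congr fun e => by simp

lemma endCount_ne_right_succ (m : ℕ) :
    endCount (m + 1) (· ≠ .right) =
      2 * endCount m (· ≠ .right) + endCount m (· = .right) := by
  rw [endCount_congr (Q := fun d => d = .hub ∨ d = .left) (by decide), endCount_or (by decide),
    endCount_succ_of_ne_left m (by decide), endCount_succ_left]
  ring

lemma endCount_ne_right_add_two (m : ℕ) :
    endCount (m + 2) (· ≠ .right) + endCount m (· ≠ .right) =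
      3 * endCount (m + 1) (· ≠ .right) := by
  rw [endCount_ne_right_succ (m + 1), endCount_ne_right_succ m,
    endCount_succ_of_ne_left m (d := .right) (by decide)]
  ring

lemma isTreeWord_iff_admissible {m : ℕ} (f : Fin (m + 1) → Dir) :
    IsTreeWord f ↔ Admissible f ∧ f (Fin.last m) ≠ .right := by
  refine and_congr_right fun _ => ⟨fun h hlast => by simpa using h _ hlast, fun h i hi => ?_⟩
  have : i ≠ Fin.last m := fun hi' => h (hi' ▸ hi)
  have := Fin.val_lt_last this
  omega

lemma card_isTreeWord (m : ℕ) :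
    Nat.card {f : Fin (m + 1) → Dir // IsTreeWord f} = endCount m (· ≠ .right) := by
  rw [Nat.card_eq_fintype_card, Fintype.card_subtype]
  exact congrArg card (filter_congr fun f _ => isTreeWord_iff_admissible f)

end Fan

lemma fanTreeCount_succ (m : ℕ) : fanTreeCount (m + 1) = Fan.endCount m (· ≠ .right) := by
  rw [fanTreeCount, SimpleGraph.card_spanningTree_eq_card_isParentMap _ none,
    ← Nat.card_congr (Fan.treeWordEquiv _), Fan.card_isTreeWord]

theorem fan_tree_recurrence :
    fanTreeCount 1 = 1 ∧ fanTreeCount 2 = 3 ∧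
      ∀ n : ℕ, 3 ≤ n →
        (fanTreeCount n : ℤ) = 3 * fanTreeCount (n - 1) - fanTreeCount (n - 2) := by
  refine ⟨by rw [fanTreeCount_succ]; decide,
    by rw [fanTreeCount_succ, Fan.endCount_ne_right_succ]; decide, fun n hn => ?_⟩
  obtain ⟨m, rfl⟩ : ∃ m, n = m + 3 := ⟨n - 3, by omega⟩
  rw [show m + 3 - 1 = m + 1 + 1 by omega, show m + 3 - 2 = m + 1 by omega, fanTreeCount_succ,
    fanTreeCount_succ, fanTreeCount_succ]
  have := Fan.endCount_ne_right_add_two m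
  omega
end
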